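/- Let (X₁, F₁, μ₁), (X₂, F₂, μ₂), (Y₁, G₁, ν₁), (Y₂, G₂, ν₂) be σ-finite measure spaces, X := X₁ × X₂ with μ := μ₁ ⊗ μ₂, Y := Y₁ × Y₂ with ν := ν₁ ⊗ ν₂. Let m : X × Y → (0,∞), v : X → (0,∞), w : Y → (0,∞) be measurable with m(x,y) ≤ C · v(x) · w(y) for all x ∈ X, y ∈ Y and some constant C > 0. If f ∈ 𝒢_v(μ) and g ∈ 𝒢_w(ν), then the tensor product f ⊗ g : X × Y → ℂ, (x,y) ↦ f(x)·g(y), belongs to 𝓑_m(X,Y) and satisfies ‖f ⊗ g‖_{𝓑_m} ≤ 2C · ‖f‖_{𝒢_v} · ‖g‖_{𝒢_w}. -/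

import Mathlib

open MeasureTheory ENNReal Filter

noncomputable section

/-- `L^p` norm (in `[0,∞]`) of an `ℝ≥0∞`-valued function. -/
def lpNormENN {α : Type*} [MeasurableSpace α] (μ : Measure α) (p : ℝ≥0∞)
    (f : α → ℝ≥0∞) : ℝ≥0∞ :=
  if p = ∞ then essSup f μ else (∫⁻ a, f a ^ p.toReal ∂μ) ^ (1 / p.toReal)

/-- Mixed `L^{p,q}` norm of an `ℝ≥0∞`-valued function on a product space. -/
def mixedNormENN {α β : Type*} [MeasurableSpace α] [MeasurableSpace β]
    (μ₁ : Measure α) (μ₂ : Measure β) (p q : ℝ≥0∞) (f : α × β → ℝ≥0∞) : ℝ≥0∞ :=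
  lpNormENN μ₂ q fun x₂ => lpNormENN μ₁ p fun x₁ => f (x₁, x₂)

/-- Mixed `L^{p,q}` norm of a complex-valued function on a product space. -/
def mixedNorm {α β : Type*} [MeasurableSpace α] [MeasurableSpace β]
    (μ₁ : Measure α) (μ₂ : Measure β) (p q : ℝ≥0∞) (f : α × β → ℂ) : ℝ≥0∞ :=
  mixedNormENN μ₁ μ₂ p q fun x => (‖f x‖₊ : ℝ≥0∞)

/-- The Schur constant `C₁(K)`. -/
def schurC1 {X Y : Type*} [MeasurableSpace X] [MeasurableSpace Y]
    (μ : Measure X) (ν : Measure Y) (K : X × Y → ℝ≥0∞) : ℝ≥0∞ :=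
  essSup (fun x => ∫⁻ y, K (x, y) ∂ν) μ

/-- The Schur constant `C₂(K)`. -/
def schurC2 {X Y : Type*} [MeasurableSpace X] [MeasurableSpace Y]
    (μ : Measure X) (ν : Measure Y) (K : X × Y → ℝ≥0∞) : ℝ≥0∞ :=
  essSup (fun y => ∫⁻ x, K (x, y) ∂μ) ν

/-- The Schur constant `C₃(K)`. -/
def schurC3 {X₁ X₂ Y₁ Y₂ : Type*} [MeasurableSpace X₁] [MeasurableSpace X₂]
    [MeasurableSpace Y₁] [MeasurableSpace Y₂]
    (μ₁ : Measure X₁) (μ₂ : Measure X₂) (ν₁ : Measure Y₁) (ν₂ : Measure Y₂)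
    (K : (X₁ × X₂) × (Y₁ × Y₂) → ℝ≥0∞) : ℝ≥0∞ :=
  essSup (fun x₂ =>
    ∫⁻ y₂, essSup (fun y₁ => ∫⁻ x₁, K ((x₁, x₂), (y₁, y₂)) ∂μ₁) ν₁ ∂ν₂) μ₂

/-- The Schur constant `C₄(K)`. -/
def schurC4 {X₁ X₂ Y₁ Y₂ : Type*} [MeasurableSpace X₁] [MeasurableSpace X₂]
    [MeasurableSpace Y₁] [MeasurableSpace Y₂]
    (μ₁ : Measure X₁) (μ₂ : Measure X₂) (ν₁ : Measure Y₁) (ν₂ : Measure Y₂)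
    (K : (X₁ × X₂) × (Y₁ × Y₂) → ℝ≥0∞) : ℝ≥0∞ :=
  essSup (fun y₂ =>
    ∫⁻ x₂, essSup (fun x₁ => ∫⁻ y₁, K ((x₁, x₂), (y₁, y₂)) ∂ν₁) μ₁ ∂μ₂) ν₂

/-- The kernel norm `‖K‖_{𝒜(U,V)}`. -/
def normA {U V : Type*} [MeasurableSpace U] [MeasurableSpace V]
    (lam : Measure U) (kap : Measure V) (K : U × V → ℝ≥0∞) : ℝ≥0∞ :=
  max (essSup (fun u => ∫⁻ v, K (u, v) ∂kap) lam)
      (essSup (fun v => ∫⁻ u, K (u, v) ∂lam) kap)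

/-- The kernel norm `‖K‖_{𝓑(X,Y)}` for an `ℝ≥0∞`-valued kernel. -/
def normB {X₁ X₂ Y₁ Y₂ : Type*} [MeasurableSpace X₁] [MeasurableSpace X₂]
    [MeasurableSpace Y₁] [MeasurableSpace Y₂]
    (μ₁ : Measure X₁) (μ₂ : Measure X₂) (ν₁ : Measure Y₁) (ν₂ : Measure Y₂)
    (K : (X₁ × X₂) × (Y₁ × Y₂) → ℝ≥0∞) : ℝ≥0∞ :=
  normA μ₂ ν₂ fun s => normA μ₁ ν₁ fun t => K ((t.1, s.1), (t.2, s.2))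

/-- The weighted kernel norm `‖K‖_{𝓑_m(X,Y)}` for an `ℝ≥0∞`-valued kernel. -/
def normBmENN {X₁ X₂ Y₁ Y₂ : Type*} [MeasurableSpace X₁] [MeasurableSpace X₂]
    [MeasurableSpace Y₁] [MeasurableSpace Y₂]
    (μ₁ : Measure X₁) (μ₂ : Measure X₂) (ν₁ : Measure Y₁) (ν₂ : Measure Y₂)
    (m : (X₁ × X₂) × (Y₁ × Y₂) → ℝ) (K : (X₁ × X₂) × (Y₁ × Y₂) → ℝ≥0∞) : ℝ≥0∞ :=
  normB μ₁ μ₂ ν₁ ν₂ fun z => ENNReal.ofReal (m z) * K z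

/-- The weighted kernel norm `‖K‖_{𝓑_m(X,Y)}` for a complex-valued kernel. -/
def normBm {X₁ X₂ Y₁ Y₂ : Type*} [MeasurableSpace X₁] [MeasurableSpace X₂]
    [MeasurableSpace Y₁] [MeasurableSpace Y₂]
    (μ₁ : Measure X₁) (μ₂ : Measure X₂) (ν₁ : Measure Y₁) (ν₂ : Measure Y₂)
    (m : (X₁ × X₂) × (Y₁ × Y₂) → ℝ) (K : (X₁ × X₂) × (Y₁ × Y₂) → ℂ) : ℝ≥0∞ :=
  normBmENN μ₁ μ₂ ν₁ ν₂ m fun z => (‖K z‖₊ : ℝ≥0∞)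

/-- The norm of the space `𝒢 = L¹ ∩ L^∞ ∩ L^{1,∞} ∩ L^{∞,1}`. -/
def Gnorm {α β : Type*} [MeasurableSpace α] [MeasurableSpace β]
    (μ₁ : Measure α) (μ₂ : Measure β) (f : α × β → ℂ) : ℝ≥0∞ :=
  max (max (eLpNorm f 1 (μ₁.prod μ₂)) (eLpNorm f ∞ (μ₁.prod μ₂)))
      (max (mixedNorm μ₁ μ₂ 1 ∞ f) (mixedNorm μ₁ μ₂ ∞ 1 f))

/-- The norm of the sum space `𝓗 = L¹ + L^∞ + L^{1,∞} + L^{∞,1}`. -/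
def Hnorm {α β : Type*} [MeasurableSpace α] [MeasurableSpace β]
    (μ₁ : Measure α) (μ₂ : Measure β) (f : α × β → ℂ) : ℝ≥0∞ :=
  ⨅ (g : (α × β → ℂ) × (α × β → ℂ) × (α × β → ℂ) × (α × β → ℂ))
    (_ : Measurable g.1 ∧ Measurable g.2.1 ∧ Measurable g.2.2.1 ∧ Measurable g.2.2.2 ∧
      f = g.1 + g.2.1 + g.2.2.1 + g.2.2.2),
    eLpNorm g.1 1 (μ₁.prod μ₂) + eLpNorm g.2.1 ∞ (μ₁.prod μ₂) +
      mixedNorm μ₁ μ₂ 1 ∞ g.2.2.1 + mixedNorm μ₁ μ₂ ∞ 1 g.2.2.2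

/-- The functional `ρ(f) = inf { ‖g‖_∞ + ‖h‖_1 : f = g + h }`. -/
def rho {α : Type*} [MeasurableSpace α] (μ : Measure α) (f : α → ℝ≥0∞) : ℝ≥0∞ :=
  ⨅ (gh : (α → ℝ≥0∞) × (α → ℝ≥0∞))
    (_ : Measurable gh.1 ∧ Measurable gh.2 ∧ f = gh.1 + gh.2),
    essSup gh.1 μ + ∫⁻ x, gh.2 x ∂μ

/-!
For a tensor kernel `F(x) G(y)` with `F, G ≥ 0`, the inner `𝒜(X₁, Y₁)`-norm at `(x₂, y₂)` is
`max (‖F(·, x₂)‖_∞ ‖G(·, y₂)‖₁) (‖F(·, x₂)‖₁ ‖G(·, y₂)‖_∞)`, which is at most the sum of two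
tensor kernels in `(x₂, y₂)`. Applying the same formula on `X₂ × Y₂` to each of them pairs the
four components of `𝒢`: `L^∞` with `L¹`, `L^{∞,1}` with `L^{1,∞}`, and the other way round,
so each summand is at most `‖F‖_𝒢 ‖G‖_𝒢`. The weight `m ≤ C v w` is absorbed pointwise.
-/

section EssSup

variable {α β : Type*} [MeasurableSpace α] [MeasurableSpace β]

theorem essSup_eq_iInf_rat (μ : Measure α) (f : α → ℝ≥0∞) :
    essSup f μ =
      ⨅ q : ℚ, if μ {x | ENNReal.ofReal q < f x} = 0 then ENNReal.ofReal q else ∞ := by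
  refine le_antisymm (le_iInf fun q => ?_) (le_of_forall_gt fun b hb => ?_)
  · split_ifs with hq
    · exact essSup_le_of_ae_le _ (ae_iff.2 (by simpa only [not_le] using hq))
    · exact le_top
  · obtain ⟨q, -, hfq, hqb⟩ := ENNReal.lt_iff_exists_rat_btwn.1 hb
    have hq : μ {x | ENNReal.ofReal q < f x} = 0 :=
      measure_mono_null (fun x hx => not_le.2 (hfq.trans hx)) (ae_iff.1 (ae_le_essSup f))
    exact (iInf_le _ q).trans_lt (by rwa [if_pos hq])

theorem Measurable.essSup_prod_left (μ : Measure α) [SFinite μ] {f : α × β → ℝ≥0∞}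
    (hf : Measurable f) : Measurable fun y => essSup (fun x => f (x, y)) μ := by
  simp_rw [essSup_eq_iInf_rat]
  refine Measurable.iInf fun q => Measurable.ite ?_ measurable_const measurable_const
  exact measurable_measure_prodMk_right (measurableSet_lt measurable_const hf)
    (measurableSet_singleton 0)

theorem essSup_essSup_le_essSup_prod (μ : Measure α) (ν : Measure β) [SFinite μ] [SFinite ν]
    {f : α × β → ℝ≥0∞} (hf : Measurable f) :
    essSup (fun y => essSup (fun x => f (x, y)) μ) ν ≤ essSup f (μ.prod ν) := by
  have hs : MeasurableSet {z : α × β | f z ≤ essSup f (μ.prod ν)} :=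
    measurableSet_le hf measurable_const
  have h := (Measure.ae_ae_comm hs).1 ((Measure.ae_prod_iff_ae_ae hs).1 (ae_le_essSup f))
  exact essSup_le_of_ae_le _ (h.mono fun y hy => essSup_le_of_ae_le _ hy)

end EssSup

section NormA

variable {U V : Type*} [MeasurableSpace U] [MeasurableSpace V] {lam : Measure U} {kap : Measure V}

theorem normA_mono {K K' : U × V → ℝ≥0∞} (h : K ≤ K') : normA lam kap K ≤ normA lam kap K' :=
  max_le_max (essSup_mono_ae (.of_forall fun _ => lintegral_mono fun _ => h _))
    (essSup_mono_ae (.of_forall fun _ => lintegral_mono fun _ => h _))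

theorem normA_const_mul {c : ℝ≥0∞} (hc : c ≠ ∞) (K : U × V → ℝ≥0∞) :
    normA lam kap (fun t => c * K t) = c * normA lam kap K := by
  simp only [normA, lintegral_const_mul' c _ hc, essSup_const_mul, mul_max]

theorem normA_add_le {K : U × V → ℝ≥0∞} (hK : Measurable K) (K' : U × V → ℝ≥0∞) :
    normA lam kap (K + K') ≤ normA lam kap K + normA lam kap K' := by
  have h₁ : (fun u => ∫⁻ v, (K + K') (u, v) ∂kap) =
      (fun u => ∫⁻ v, K (u, v) ∂kap) + fun u => ∫⁻ v, K' (u, v) ∂kap :=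
    funext fun u => lintegral_add_left (hK.comp measurable_prodMk_left) _
  have h₂ : (fun v => ∫⁻ u, (K + K') (u, v) ∂lam) =
      (fun v => ∫⁻ u, K (u, v) ∂lam) + fun v => ∫⁻ u, K' (u, v) ∂lam :=
    funext fun v => lintegral_add_left (hK.comp measurable_prodMk_right) _
  rw [normA, h₁, h₂]
  exact (max_le_max (essSup_add_le _ _) (essSup_add_le _ _)).trans max_add_add_le_max_add_max

theorem normA_mul {F : U → ℝ≥0∞} {G : V → ℝ≥0∞} (hF : AEMeasurable F lam)
    (hG : AEMeasurable G kap) :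
    normA lam kap (fun t => F t.1 * G t.2) =
      max (essSup F lam * ∫⁻ v, G v ∂kap) ((∫⁻ u, F u ∂lam) * essSup G kap) := by
  simp only [normA, lintegral_const_mul'' _ hG, lintegral_mul_const'' _ hF,
    mul_comm _ (∫⁻ v, G v ∂kap), essSup_const_mul]

end NormA

theorem ofReal_mul_enorm_mul_le {𝕜 : Type*} [RCLike 𝕜] {C r s t : ℝ} (hC : 0 ≤ C)
    (h : r ≤ C * s * t) (a b : 𝕜) :
    ENNReal.ofReal r * ‖a * b‖ₑ ≤ ENNReal.ofReal C * (‖(s : 𝕜) * a‖ₑ * ‖(t : 𝕜) * b‖ₑ) := by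
  have hr : r ≤ C * |s| * |t| := by
    calc r ≤ C * s * t := h
      _ ≤ |C * s * t| := le_abs_self _
      _ = C * |s| * |t| := by rw [abs_mul, abs_mul, abs_of_nonneg hC]
  calc ENNReal.ofReal r * ‖a * b‖ₑ ≤ ENNReal.ofReal (C * |s| * |t|) * (‖a‖ₑ * ‖b‖ₑ) := by
        rw [enorm_mul]; gcongr
    _ = ENNReal.ofReal C * (‖(s : 𝕜) * a‖ₑ * ‖(t : 𝕜) * b‖ₑ) := by
        rw [ENNReal.ofReal_mul (by positivity), ENNReal.ofReal_mul hC, enorm_mul, enorm_mul,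
          ← ofReal_norm (s : 𝕜), ← ofReal_norm (t : 𝕜), RCLike.norm_ofReal,
          RCLike.norm_ofReal]
        ring

section GNorm

variable {α β : Type*} [MeasurableSpace α] [MeasurableSpace β]

def GnormENN (μ₁ : Measure α) (μ₂ : Measure β) (F : α × β → ℝ≥0∞) : ℝ≥0∞ :=
  max (max (∫⁻ z, F z ∂(μ₁.prod μ₂)) (essSup F (μ₁.prod μ₂)))
    (max (essSup (fun x₂ => ∫⁻ x₁, F (x₁, x₂) ∂μ₁) μ₂)
      (∫⁻ x₂, essSup (fun x₁ => F (x₁, x₂)) μ₁ ∂μ₂))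

theorem Gnorm_eq_GnormENN (μ₁ : Measure α) (μ₂ : Measure β) (h : α × β → ℂ) :
    Gnorm μ₁ μ₂ h = GnormENN μ₁ μ₂ fun z => ‖h z‖ₑ := by
  simp [Gnorm, GnormENN, mixedNorm, mixedNormENN, lpNormENN, eLpNorm_one_eq_lintegral_enorm,
    eLpNorm_exponent_top, eLpNormEssSup, enorm_eq_nnnorm]

theorem iterated_le_GnormENN (μ₁ : Measure α) (μ₂ : Measure β) [SFinite μ₁] [SFinite μ₂]
    {F : α × β → ℝ≥0∞} (hF : Measurable F) :
    essSup (fun x₂ => essSup (fun x₁ => F (x₁, x₂)) μ₁) μ₂ ≤ GnormENN μ₁ μ₂ F ∧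
      ∫⁻ x₂, essSup (fun x₁ => F (x₁, x₂)) μ₁ ∂μ₂ ≤ GnormENN μ₁ μ₂ F ∧
      essSup (fun x₂ => ∫⁻ x₁, F (x₁, x₂) ∂μ₁) μ₂ ≤ GnormENN μ₁ μ₂ F ∧
      ∫⁻ x₂, ∫⁻ x₁, F (x₁, x₂) ∂μ₁ ∂μ₂ ≤ GnormENN μ₁ μ₂ F :=
  ⟨(essSup_essSup_le_essSup_prod μ₁ μ₂ hF).trans (le_max_of_le_left (le_max_right _ _)),
    le_max_of_le_right (le_max_right _ _), le_max_of_le_right (le_max_left _ _),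
    (lintegral_prod_symm' F hF).ge.trans (le_max_of_le_left (le_max_left _ _))⟩

end GNorm

section Kernel

variable {X₁ X₂ Y₁ Y₂ : Type*} [MeasurableSpace X₁] [MeasurableSpace X₂]
  [MeasurableSpace Y₁] [MeasurableSpace Y₂]
  (μ₁ : Measure X₁) (μ₂ : Measure X₂) (ν₁ : Measure Y₁) (ν₂ : Measure Y₂)

theorem normB_mono {K K' : (X₁ × X₂) × (Y₁ × Y₂) → ℝ≥0∞} (h : K ≤ K') :
    normB μ₁ μ₂ ν₁ ν₂ K ≤ normB μ₁ μ₂ ν₁ ν₂ K' :=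
  normA_mono fun _ => normA_mono fun _ => h _

theorem normB_const_mul {c : ℝ≥0∞} (hc : c ≠ ∞) (K : (X₁ × X₂) × (Y₁ × Y₂) → ℝ≥0∞) :
    normB μ₁ μ₂ ν₁ ν₂ (fun z => c * K z) = c * normB μ₁ μ₂ ν₁ ν₂ K := by
  simp only [normB, normA_const_mul hc]

theorem normB_mul_le [SFinite μ₁] [SFinite μ₂] [SFinite ν₁] [SFinite ν₂]
    {F : X₁ × X₂ → ℝ≥0∞} {G : Y₁ × Y₂ → ℝ≥0∞} (hF : Measurable F) (hG : Measurable G) :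
    normB μ₁ μ₂ ν₁ ν₂ (fun z => F z.1 * G z.2) ≤
      2 * GnormENN μ₁ μ₂ F * GnormENN ν₁ ν₂ G := by
  set A := fun x₂ => essSup (fun x₁ => F (x₁, x₂)) μ₁
  set a := fun x₂ => ∫⁻ x₁, F (x₁, x₂) ∂μ₁
  set B := fun y₂ => ∫⁻ y₁, G (y₁, y₂) ∂ν₁
  set b := fun y₂ => essSup (fun y₁ => G (y₁, y₂)) ν₁
  have hA : Measurable A := hF.essSup_prod_left μ₁
  have ha : Measurable a := hF.lintegral_prod_left'
  have hB : Measurable B := hG.lintegral_prod_left'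
  have hb : Measurable b := hG.essSup_prod_left ν₁
  obtain ⟨hA_sup, hA_int, ha_sup, ha_int⟩ := iterated_le_GnormENN μ₁ μ₂ hF
  obtain ⟨hb_sup, hb_int, hB_sup, hB_int⟩ := iterated_le_GnormENN ν₁ ν₂ hG
  have hsections : (fun s : X₂ × Y₂ => normA μ₁ ν₁ fun t => F (t.1, s.1) * G (t.2, s.2)) =
      fun s => max (A s.1 * B s.2) (a s.1 * b s.2) :=
    funext fun s => normA_mul (F := fun x₁ => F (x₁, s.1)) (G := fun y₁ => G (y₁, s.2))
      (hF.comp measurable_prodMk_right).aemeasurable (hG.comp measurable_prodMk_right).aemeasurable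
  calc normB μ₁ μ₂ ν₁ ν₂ (fun z => F z.1 * G z.2)
      = normA μ₂ ν₂ fun s => max (A s.1 * B s.2) (a s.1 * b s.2) := congrArg (normA μ₂ ν₂) hsections
    _ ≤ normA μ₂ ν₂ ((fun s => A s.1 * B s.2) + fun s => a s.1 * b s.2) :=
        normA_mono fun s => max_le_add_of_nonneg zero_le zero_le
    _ ≤ normA μ₂ ν₂ (fun s => A s.1 * B s.2) + normA μ₂ ν₂ (fun s => a s.1 * b s.2) :=
        normA_add_le ((hA.comp measurable_fst).mul (hB.comp measurable_snd)) _
    _ = max (essSup A μ₂ * ∫⁻ y₂, B y₂ ∂ν₂) ((∫⁻ x₂, A x₂ ∂μ₂) * essSup B ν₂) +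
          max (essSup a μ₂ * ∫⁻ y₂, b y₂ ∂ν₂) ((∫⁻ x₂, a x₂ ∂μ₂) * essSup b ν₂) := by
        rw [normA_mul hA.aemeasurable hB.aemeasurable, normA_mul ha.aemeasurable hb.aemeasurable]
    _ ≤ GnormENN μ₁ μ₂ F * GnormENN ν₁ ν₂ G + GnormENN μ₁ μ₂ F * GnormENN ν₁ ν₂ G :=
        add_le_add (max_le (mul_le_mul' hA_sup hB_int) (mul_le_mul' hA_int hB_sup))
          (max_le (mul_le_mul' ha_sup hb_int) (mul_le_mul' ha_int hb_sup))
    _ = 2 * GnormENN μ₁ μ₂ F * GnormENN ν₁ ν₂ G := by ring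

end Kernel

theorem tensor_mem_Bm_general
    {X₁ X₂ Y₁ Y₂ : Type*} [MeasurableSpace X₁] [MeasurableSpace X₂]
    [MeasurableSpace Y₁] [MeasurableSpace Y₂]
    (μ₁ : Measure X₁) (μ₂ : Measure X₂) (ν₁ : Measure Y₁) (ν₂ : Measure Y₂)
    [SigmaFinite μ₁] [SigmaFinite μ₂] [SigmaFinite ν₁] [SigmaFinite ν₂]
    (m : (X₁ × X₂) × (Y₁ × Y₂) → ℝ)
    (v : X₁ × X₂ → ℝ) (w : Y₁ × Y₂ → ℝ) (hv : Measurable v) (hw : Measurable w)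
    (C : ℝ) (hC : 0 < C)
    (hm_le : ∀ (x : X₁ × X₂) (y : Y₁ × Y₂), m (x, y) ≤ C * v x * w y)
    (f : X₁ × X₂ → ℂ) (g : Y₁ × Y₂ → ℂ) (hf : Measurable f) (hg : Measurable g)
    (hfG : Gnorm μ₁ μ₂ (fun x => (v x : ℂ) * f x) < ∞)
    (hgG : Gnorm ν₁ ν₂ (fun y => (w y : ℂ) * g y) < ∞) :
    normBm μ₁ μ₂ ν₁ ν₂ m (fun z => f z.1 * g z.2) < ∞ ∧
    normBm μ₁ μ₂ ν₁ ν₂ m (fun z => f z.1 * g z.2) ≤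
      2 * ENNReal.ofReal C * Gnorm μ₁ μ₂ (fun x => (v x : ℂ) * f x) *
        Gnorm ν₁ ν₂ (fun y => (w y : ℂ) * g y) := by
  set F := fun x => ‖(v x : ℂ) * f x‖ₑ
  set G := fun y => ‖(w y : ℂ) * g y‖ₑ
  have hF : Measurable F := ((Complex.measurable_ofReal.comp hv).mul hf).enorm
  have hG : Measurable G := ((Complex.measurable_ofReal.comp hw).mul hg).enorm
  have hbound : normBm μ₁ μ₂ ν₁ ν₂ m (fun z => f z.1 * g z.2) ≤
      2 * ENNReal.ofReal C * Gnorm μ₁ μ₂ (fun x => (v x : ℂ) * f x) *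
        Gnorm ν₁ ν₂ (fun y => (w y : ℂ) * g y) :=
    calc normBm μ₁ μ₂ ν₁ ν₂ m (fun z => f z.1 * g z.2)
        ≤ normB μ₁ μ₂ ν₁ ν₂ (fun z => ENNReal.ofReal C * (F z.1 * G z.2)) :=
          normB_mono _ _ _ _ (K := fun z => ENNReal.ofReal (m z) * ‖f z.1 * g z.2‖ₑ)
            fun z => ofReal_mul_enorm_mul_le hC.le (hm_le z.1 z.2) _ _
      _ = ENNReal.ofReal C * normB μ₁ μ₂ ν₁ ν₂ (fun z => F z.1 * G z.2) :=
          normB_const_mul _ _ _ _ ofReal_ne_top _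
      _ ≤ ENNReal.ofReal C * (2 * GnormENN μ₁ μ₂ F * GnormENN ν₁ ν₂ G) :=
          mul_le_mul_right (normB_mul_le _ _ _ _ hF hG) _
      _ = _ := by rw [Gnorm_eq_GnormENN, Gnorm_eq_GnormENN]; ring
  exact ⟨hbound.trans_lt (by finiteness), hbound⟩

/-- Tensor products of functions in the weighted spaces `𝒢_v`, `𝒢_w` belong to `𝓑_m`
(Lemma `lem:KernelModuleRichnessResult`). -/
theorem tensor_mem_Bm
    {X₁ X₂ Y₁ Y₂ : Type*} [MeasurableSpace X₁] [MeasurableSpace X₂]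
    [MeasurableSpace Y₁] [MeasurableSpace Y₂]
    (μ₁ : Measure X₁) (μ₂ : Measure X₂) (ν₁ : Measure Y₁) (ν₂ : Measure Y₂)
    [SigmaFinite μ₁] [SigmaFinite μ₂] [SigmaFinite ν₁] [SigmaFinite ν₂]
    (m : (X₁ × X₂) × (Y₁ × Y₂) → ℝ) (hm : Measurable m) (hm_pos : ∀ z, 0 < m z)
    (v : X₁ × X₂ → ℝ) (w : Y₁ × Y₂ → ℝ) (hv : Measurable v) (hw : Measurable w)
    (hv_pos : ∀ x, 0 < v x) (hw_pos : ∀ y, 0 < w y)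
    (C : ℝ) (hC : 0 < C)
    (hm_le : ∀ (x : X₁ × X₂) (y : Y₁ × Y₂), m (x, y) ≤ C * v x * w y)
    (f : X₁ × X₂ → ℂ) (g : Y₁ × Y₂ → ℂ) (hf : Measurable f) (hg : Measurable g)
    (hfG : Gnorm μ₁ μ₂ (fun x => (v x : ℂ) * f x) < ∞)
    (hgG : Gnorm ν₁ ν₂ (fun y => (w y : ℂ) * g y) < ∞) :
    normBm μ₁ μ₂ ν₁ ν₂ m (fun z => f z.1 * g z.2) < ∞ ∧
    normBm μ₁ μ₂ ν₁ ν₂ m (fun z => f z.1 * g z.2) ≤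
      2 * ENNReal.ofReal C * Gnorm μ₁ μ₂ (fun x => (v x : ℂ) * f x) *
        Gnorm ν₁ ν₂ (fun y => (w y : ℂ) * g y) :=
  tensor_mem_Bm_general μ₁ μ₂ ν₁ ν₂ m v w hv hw C hC hm_le f g hf hg hfG hgG

end
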